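/- arXiv:1912.10341 — 6 statements merged into one kernel-verified Lean document; each statement's English description precedes it below -/
import Mathlib

section
/- Let X ≥ 16, N = ⌊√(2πX)⌋, k a positive integer with k ≤ N, Y a real number with |Y| ≤ 1/(kN), and τ = 1/X + 2πiY. Then Re(1/τ) ≥ 0.07·k². -/
open Real Complex

/-!
`Re (1/τ) = X / (1 + (2πXY)²)`, and after multiplying by `N²` the bound `|Y| ≤ 1/(kN)` reduces
the claim to `0.07 k²N² + 0.28 π²X² ≤ X N²`. Since `k ≤ N ≤ √(2πX)` the first term is at most
`0.14 π X N²`; since `√(2πX) ≥ 10` we have `N ≥ 0.9 √(2πX)`, so the second is at most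
`(0.28 π / 1.62) X N²`, and `0.14 π + 0.28 π / 1.62 < 1`.
-/

theorem re_one_div_inv_add_mul_I {a : ℝ} (ha : 0 < a) (b : ℝ) :
    (1 / (1 / (a : ℂ) + b * I)).re = a / (1 + (a * b) ^ 2) := by
  have h : (1 / (a : ℂ) + b * I) = ((1 / a : ℝ) : ℂ) + (b : ℂ) * I := by push_cast; ring
  rw [h, one_div, inv_re, normSq_add_mul_I, add_re, ofReal_re, re_ofReal_mul, I_re, mul_zero,
    add_zero]
  field_simp

theorem sq_floor_sqrt_le {x : ℝ} (hx : 0 ≤ x) : (⌊√x⌋₊ : ℝ) ^ 2 ≤ x := by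
  calc (⌊√x⌋₊ : ℝ) ^ 2 ≤ √x ^ 2 := by gcongr; exact Nat.floor_le (sqrt_nonneg x)
    _ = x := sq_sqrt hx

/-- For `√x ≥ 10` the floor loses at most a tenth of `√x`. -/
theorem mul_le_sq_floor_sqrt {x : ℝ} (hx : 100 ≤ x) : 0.81 * x ≤ (⌊√x⌋₊ : ℝ) ^ 2 := by
  have hsq : √x ^ 2 = x := sq_sqrt (by linarith)
  have h10 : 10 ≤ √x := le_sqrt_of_sq_le (by linarith)
  have hfloor : √x - 1 ≤ ⌊√x⌋₊ := by linarith [Nat.lt_floor_add_one √x]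
  nlinarith

theorem mul_sq_mul_one_add_sq_le_of_abs_le {X m n Y : ℝ} (hX : 0 < X) (hm : 0 < m) (hmn : m ≤ n)
    (hn : 0.81 * (2 * π * X) ≤ n ^ 2) (hn' : n ^ 2 ≤ 2 * π * X) (hY : |Y| ≤ 1 / (m * n)) :
    0.07 * m ^ 2 * (1 + (X * (2 * π * Y)) ^ 2) ≤ X := by
  have hn0 : 0 < n := hm.trans_le hmn
  have hmnY : (m * n * Y) ^ 2 ≤ 1 := by
    rw [← sq_abs, abs_mul, abs_of_pos (by positivity : 0 < m * n)]
    exact pow_le_one₀ (by positivity) ((le_div_iff₀' (by positivity)).mp hY)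
  have hπ := pi_lt_d2
  suffices 0.07 * m ^ 2 * (1 + (X * (2 * π * Y)) ^ 2) * n ^ 2 ≤ X * n ^ 2 from
    le_of_mul_le_mul_right this (by positivity)
  calc 0.07 * m ^ 2 * (1 + (X * (2 * π * Y)) ^ 2) * n ^ 2
      = 0.07 * m ^ 2 * n ^ 2 + 0.28 * π ^ 2 * X ^ 2 * (m * n * Y) ^ 2 := by ring
    _ ≤ 0.07 * n ^ 2 * (2 * π * X) + 0.28 * π ^ 2 * X ^ 2 := by
        refine add_le_add ?_ (mul_le_of_le_one_right (by positivity) hmnY)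
        have : m ^ 2 ≤ n ^ 2 := by gcongr
        nlinarith
    _ ≤ X * n ^ 2 := by
        have hc : 0 < 1 - 0.14 * π := by linarith
        have := mul_le_mul_of_nonneg_left hn (mul_pos hc hX).le
        nlinarith [mul_pos (mul_pos pi_pos hX) hX]

theorem stmt_4 (X : ℝ) (hX : 16 ≤ X) (N : ℕ) (hN : N = ⌊Real.sqrt (2 * π * X)⌋₊)
    (k : ℕ) (hk : 1 ≤ k) (hkN : k ≤ N) (Y : ℝ) (hY : |Y| ≤ 1 / (k * N))
    (τ : ℂ) (hτ : τ = 1 / X + 2 * π * Complex.I * Y) :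
    0.07 * (k : ℝ) ^ 2 ≤ (1 / τ).re := by
  have hX0 : 0 < X := by linarith
  have h2πX : 100 ≤ 2 * π * X := by nlinarith [pi_gt_d2]
  have hτ' : τ = 1 / (X : ℂ) + ((2 * π * Y : ℝ) : ℂ) * I := by rw [hτ]; push_cast; ring
  rw [hτ', re_one_div_inv_add_mul_I hX0, le_div_iff₀ (by positivity)]
  subst hN
  exact mul_sq_mul_one_add_sq_le_of_abs_le hX0 (by exact_mod_cast hk) (by exact_mod_cast hkN)
    (mul_le_sq_floor_sqrt h2πX) (sq_floor_sqrt_le (by linarith)) hY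
end

section
/- For every real x with 0 < x ≤ π/2, one has |log(2 sin x)| ≤ (π log 2)/(2x). -/
/-!
Since `2 sin x ≤ 2` and `π / (2x) ≥ 1`, the logarithm is at most `log 2 ≤ π log 2 / (2x)`.
For the lower bound, Jordan's inequality `sin x ≥ 2x/π` gives `log (2 sin x) ≥ log (4x/π)`, and
`log y ≥ 1 - 1/y` turns this into `-π/(4x)`, which is at least `-π log 2 / (2x)` as `log 2 ≥ 1/2`.
-/

open Real

theorem Real.log_two_mul_sin_le_log_two (x : ℝ) : log (2 * sin x) ≤ log 2 := by
  rcases eq_or_ne (sin x) 0 with hsin | hsin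
  · simp [hsin, log_nonneg one_le_two]
  · rw [← log_abs, abs_mul, abs_two]
    apply log_le_log (by positivity)
    nlinarith [abs_sin_le_one x]

theorem Real.log_two_mul_sin_le_pi_mul_log_two_div {x : ℝ} (hx : 0 < x) (hx' : x ≤ π / 2) :
    log (2 * sin x) ≤ π * log 2 / (2 * x) := by
  have hlog_two : 0 < log 2 := log_pos one_lt_two
  calc log (2 * sin x) ≤ log 2 := log_two_mul_sin_le_log_two x
    _ ≤ π * log 2 / (2 * x) := by
      rw [le_div_iff₀ (by positivity)]
      nlinarith

theorem Real.neg_pi_mul_log_two_div_le_log_two_mul_sin {x : ℝ} (hx : 0 < x) (hx' : x ≤ π / 2) :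
    -(π * log 2 / (2 * x)) ≤ log (2 * sin x) := by
  have hjordan : 2 / π * x ≤ sin x := mul_le_sin hx.le hx'
  have hlog_two : 1 / 2 < log 2 := by linarith [log_two_gt_d9]
  calc -(π * log 2 / (2 * x)) ≤ -(π / (4 * x)) := by
        rw [neg_le_neg_iff, div_le_div_iff₀ (by positivity) (by positivity)]
        nlinarith [mul_pos pi_pos hx]
    _ ≤ 1 - (4 * x / π)⁻¹ := by rw [inv_div]; linarith
    _ ≤ log (4 * x / π) := one_sub_inv_le_log_of_pos (by positivity)
    _ ≤ log (2 * sin x) := by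
        apply log_le_log (by positivity)
        linarith [show 4 * x / π = 2 * (2 / π * x) by ring]

theorem stmt_5 (x : ℝ) (hx : 0 < x) (hx' : x ≤ π / 2) :
    |Real.log (2 * Real.sin x)| ≤ π * Real.log 2 / (2 * x) :=
  abs_le.mpr ⟨neg_pi_mul_log_two_div_le_log_two_mul_sin hx hx',
    log_two_mul_sin_le_pi_mul_log_two_div hx hx'⟩
end

section
/- For any real q with 0 ≤ q < 1, -log((q;q)_∞) ≤ q/(1-q)², where (q;q)_∞ = ∏_{k≥1}(1 - q^k). -/
/-!
Taking logarithms turns the product into the series `∑ -log (1 - q^(k+1))`. Each term is at most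
`q^(k+1) / (1 - q^(k+1)) ≤ q^(k+1) / (1 - q)`, and these bounds sum to `q / (1 - q)^2`.
-/

open Real

theorem Real.neg_log_one_sub_le_div {x : ℝ} (hx : x < 1) : -log (1 - x) ≤ x / (1 - x) := by
  have h := one_sub_inv_le_log_of_pos (sub_pos.mpr hx)
  have hinv : 1 - (1 - x)⁻¹ = -(x / (1 - x)) := by
    field_simp [(sub_pos.mpr hx).ne']
    ring
  linarith

theorem Real.neg_log_one_sub_le_div_of_le {x c : ℝ} (hx0 : 0 ≤ x) (hxc : x ≤ c) (hc : c < 1) :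
    -log (1 - x) ≤ x / (1 - c) :=
  (neg_log_one_sub_le_div (hxc.trans_lt hc)).trans <|
    div_le_div_of_nonneg_left hx0 (sub_pos.mpr hc) (by linarith)

theorem Real.neg_log_tprod_one_sub_le {ι : Type*} {f : ι → ℝ} {c : ℝ} (hf0 : ∀ i, 0 ≤ f i)
    (hfc : ∀ i, f i ≤ c) (hc : c < 1) (hf : Summable f) :
    -log (∏' i, (1 - f i)) ≤ (∑' i, f i) / (1 - c) := by
  have hlog : Summable fun i ↦ log (1 - f i) := by
    simpa [sub_eq_add_neg] using summable_log_one_add_of_summable hf.neg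
  rw [← rexp_tsum_eq_tprod (fun i ↦ sub_pos.mpr ((hfc i).trans_lt hc)) hlog, log_exp,
    ← tsum_neg, ← tsum_div_const]
  exact hlog.neg.tsum_le_tsum (fun i ↦ neg_log_one_sub_le_div_of_le (hf0 i) (hfc i) hc)
    (hf.div_const _)

theorem tsum_geometric_succ_of_lt_one {r : ℝ} (h₀ : 0 ≤ r) (h₁ : r < 1) :
    ∑' n : ℕ, r ^ (n + 1) = r / (1 - r) := by
  simp only [pow_succ', tsum_mul_left, tsum_geometric_of_lt_one h₀ h₁, div_eq_mul_inv]

theorem stmt_7 (q : ℝ) (hq0 : 0 ≤ q) (hq1 : q < 1) :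
    -Real.log (∏' k : ℕ, (1 - q ^ (k + 1))) ≤ q / (1 - q) ^ 2 := by
  have hle : ∀ k : ℕ, q ^ (k + 1) ≤ q := fun k ↦ pow_le_of_le_one hq0 hq1.le k.succ_ne_zero
  have hsum : Summable fun k : ℕ ↦ q ^ (k + 1) :=
    (summable_geometric_of_lt_one hq0 hq1).comp_injective (add_left_injective 1)
  calc -log (∏' k : ℕ, (1 - q ^ (k + 1)))
      ≤ (∑' k : ℕ, q ^ (k + 1)) / (1 - q) :=
        neg_log_tprod_one_sub_le (fun k ↦ pow_nonneg hq0 _) hle hq1 hsum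
    _ = q / (1 - q) ^ 2 := by rw [tsum_geometric_succ_of_lt_one hq0 hq1, div_div, sq]
end

section
/- Let k be a positive integer and θ an integer with 1 ≤ θ ≤ k. Then ∑_{α=1}^{k} cos(2παθ/k) · ζ(2, α/k) = (π²/6)·(6θ² - 6kθ + k²), where ζ(2, a) = ∑_{n≥0} 1/(n+a)² is the Hurwitz zeta function at s = 2. -/
/-! For `x ∈ [0, 1]` the Fourier series `∑_{m ≥ 1} cos (2π m x) / m²` equals `π² B₂(x)`, with
`B₂(x) = x² - x + 1/6`. Take `x = θ / k` and split `m = n k + α` by residue classes, `1 ≤ α ≤ k`: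
then `cos (2π m θ / k) = cos (2π α θ / k)` and `1 / m² = k⁻² / (n + α / k)²`, so the left-hand side
is `k² π² B₂(θ / k)`. -/

open Real Finset

theorem Polynomial.eval_map_bernoulli_two (x : ℝ) :
    ((Polynomial.bernoulli 2).map (algebraMap ℚ ℝ)).eval x = x ^ 2 - x + 1 / 6 := by
  simp [Polynomial.bernoulli, Finset.sum_range_succ, bernoulli_eq_bernoulli'_of_ne_one]
  ring

theorem hasSum_one_div_nat_sq_mul_cos {x : ℝ} (hx : x ∈ Set.Icc (0 : ℝ) 1) :
    HasSum (fun n : ℕ => 1 / (n : ℝ) ^ 2 * cos (2 * π * n * x)) (π ^ 2 * (x ^ 2 - x + 1 / 6)) := by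
  have h := hasSum_one_div_nat_pow_mul_cos one_ne_zero hx
  rw [mul_one, Polynomial.eval_map_bernoulli_two] at h
  convert h using 2
  norm_num [Nat.factorial]
  ring

theorem tsum_eq_sum_Icc_tsum_mul_add {R : Type*} [AddCommGroup R] [UniformSpace R]
    [IsUniformAddGroup R] [CompleteSpace R] [T0Space R] {f : ℕ → R} (hf : Summable f)
    (hf0 : f 0 = 0) {k : ℕ} (hk : k ≠ 0) :
    ∑' m, f m = ∑ α ∈ Icc 1 k, ∑' n, f (n * k + α) := by
  have : NeZero k := ⟨hk⟩
  rw [hf.tsum_eq_zero_add, hf0, zero_add, Nat.sumByResidueClasses ((summable_nat_add_iff 1).2 hf) k]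
  obtain ⟨k, rfl⟩ := Nat.exists_eq_add_one_of_ne_zero hk
  refine (Fin.sum_univ_eq_sum_range (fun j => ∑' m, f (j + (k + 1) * m + 1)) (k + 1)).trans ?_
  rw [← Finset.Ico_add_one_right_eq_Icc, Finset.sum_Ico_eq_sum_range, Nat.add_sub_cancel]
  refine Finset.sum_congr rfl fun j _ => tsum_congr fun n => ?_
  congr 1
  ring

theorem cos_two_pi_mul_nat_mul_add_mul_div (n k α θ : ℕ) (hk : k ≠ 0) :
    cos (2 * π * ((n * k + α : ℕ) : ℝ) * (θ / k)) = cos (2 * π * α * θ / k) := by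
  have hθ : 2 * π * ((n * k + α : ℕ) : ℝ) * (θ / k) = 2 * π * α * θ / k + (n * θ : ℕ) * (2 * π) := by
    push_cast
    field_simp
    ring
  rw [hθ, cos_add_nat_mul_two_pi]

theorem one_div_add_div_sq (n k α : ℕ) (hk : k ≠ 0) :
    1 / ((n : ℝ) + α / k) ^ 2 = k ^ 2 / ((n * k + α : ℕ) : ℝ) ^ 2 := by
  rw [show (n : ℝ) + α / k = (n * k + α : ℕ) / k by push_cast; field_simp, div_pow, one_div_div]

theorem stmt_9_general (k : ℕ) (hk : 1 ≤ k) (θ : ℕ) (hθk : θ ≤ k) :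
    ∑ α ∈ Finset.Icc 1 k, Real.cos (2 * π * α * θ / k) *
        (∑' n : ℕ, 1 / ((n : ℝ) + (α : ℝ) / k) ^ 2) =
      π ^ 2 / 6 * (6 * (θ : ℝ) ^ 2 - 6 * k * θ + k ^ 2) := by
  have hk0 : k ≠ 0 := Nat.one_le_iff_ne_zero.mp hk
  have hx : (θ / k : ℝ) ∈ Set.Icc 0 1 :=
    ⟨by positivity, div_le_one_of_le₀ (by exact_mod_cast hθk) (Nat.cast_nonneg k)⟩
  have hsum := hasSum_one_div_nat_sq_mul_cos hx
  calc _ = (k : ℝ) ^ 2 * ∑ α ∈ Icc 1 k, ∑' n : ℕ,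
        1 / ((n * k + α : ℕ) : ℝ) ^ 2 * cos (2 * π * ((n * k + α : ℕ) : ℝ) * (θ / k)) := by
        rw [mul_sum]
        refine sum_congr rfl fun α _ => ?_
        rw [← tsum_mul_left, ← tsum_mul_left]
        refine tsum_congr fun n => ?_
        rw [cos_two_pi_mul_nat_mul_add_mul_div n k α θ hk0, one_div_add_div_sq n k α hk0]
        ring
    _ = (k : ℝ) ^ 2 * (π ^ 2 * ((θ / k : ℝ) ^ 2 - θ / k + 1 / 6)) := by
        rw [← tsum_eq_sum_Icc_tsum_mul_add hsum.summable (by simp) hk0, hsum.tsum_eq]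
    _ = _ := by
        field_simp

theorem stmt_9 (k : ℕ) (hk : 1 ≤ k) (θ : ℕ) (hθ1 : 1 ≤ θ) (hθk : θ ≤ k) :
    ∑ α ∈ Finset.Icc 1 k, Real.cos (2 * π * α * θ / k) *
        (∑' n : ℕ, 1 / ((n : ℝ) + (α : ℝ) / k) ^ 2) =
      π ^ 2 / 6 * (6 * (θ : ℝ) ^ 2 - 6 * k * θ + k ^ 2) :=
  stmt_9_general k hk θ hθk
end

section
/- Let k be a positive integer and θ an integer with 1 ≤ θ ≤ k-1. Then ∑_{α=1}^{k} cos(2παθ/k) · ψ(α/k) = k·log(2 sin(πθ/k)), where ψ is the digamma function. -/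
open Real Finset

/-- The digamma function `ψ = Γ'/Γ`. -/
noncomputable def digamma (x : ℝ) : ℝ := deriv Real.Gamma x / Real.Gamma x

/-!
From `ψ (x + 1) = ψ x + 1 / x` and the monotonicity of `ψ` (convexity of `log Γ`) one gets
`ψ y - ψ x = ∑ₙ (1 / (x + n) - 1 / (y + n))`. For the `k`-periodic, mean-zero weights
`a α = cos (2π α θ / k)` this turns `∑_α a α ψ (α / k)` into `-k ∑_{m ≥ 1} a m / m`, the real part
of `k log (1 - z)` at `z = e^{2πiθ/k}`, and `|1 - z| = 2 sin (π θ / k)`.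
-/

open Filter Topology

lemma hasDerivAt_log_Gamma {x : ℝ} (hx : 0 < x) :
    HasDerivAt (fun y => log (Gamma y)) (digamma x) x := by
  have hΓ : HasDerivAt Gamma (deriv Gamma x) x :=
    (differentiableOn_Gamma_Ioi.differentiableAt (Ioi_mem_nhds hx)).hasDerivAt
  exact hΓ.log (Gamma_pos_of_pos hx).ne'

lemma digamma_add_one {x : ℝ} (hx : 0 < x) : digamma (x + 1) = digamma x + x⁻¹ := by
  have h₁ : HasDerivAt (fun y => log (Gamma (y + 1))) (digamma (x + 1)) x :=
    (hasDerivAt_log_Gamma (by linarith)).comp_add_const x 1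
  have h₂ : HasDerivAt (fun y => log y + log (Gamma y)) (x⁻¹ + digamma x) x :=
    (hasDerivAt_log hx.ne').add (hasDerivAt_log_Gamma hx)
  have heq : (fun y => log (Gamma (y + 1))) =ᶠ[𝓝 x] fun y => log y + log (Gamma y) := by
    filter_upwards [eventually_gt_nhds hx] with y hy
    rw [Gamma_add_one hy.ne', log_mul hy.ne' (Gamma_pos_of_pos hy).ne']
  rw [h₁.unique (h₂.congr_of_eventuallyEq heq), add_comm]

lemma digamma_add_nat {x : ℝ} (hx : 0 < x) (n : ℕ) :
    digamma (x + n) = digamma x + ∑ i ∈ range n, (x + i)⁻¹ := by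
  induction n with
  | zero => simp
  | succ n ih =>
    rw [Nat.cast_succ, ← add_assoc, digamma_add_one (by positivity), ih, sum_range_succ,
      add_assoc]

lemma monotoneOn_digamma : MonotoneOn digamma (Set.Ioi 0) :=
  (convexOn_log_Gamma.monotoneOn_deriv fun _ hx =>
    (hasDerivAt_log_Gamma hx).differentiableAt).congr fun _ hx =>
      (hasDerivAt_log_Gamma hx).deriv

/-- Monotonicity squeezes `ψ (y + n) - ψ (x + n)` between `0` and
`ψ (x + n + 1) - ψ (x + n) = 1 / (x + n)`. -/
lemma tendsto_digamma_add_nat_sub {x y : ℝ} (hx : 0 < x) (hxy : x ≤ y) (hyx : y ≤ x + 1) :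
    Tendsto (fun n : ℕ => digamma (y + n) - digamma (x + n)) atTop (𝓝 0) := by
  have hpos : ∀ n : ℕ, 0 < x + n := fun n => by positivity
  have hmono : ∀ {u v : ℝ}, 0 < u → u ≤ v → digamma u ≤ digamma v := fun hu huv =>
    monotoneOn_digamma (Set.mem_Ioi.2 hu) (Set.mem_Ioi.2 (hu.trans_le huv)) huv
  have hinv : Tendsto (fun n : ℕ => (x + n)⁻¹) atTop (𝓝 0) :=
    tendsto_inv_atTop_zero.comp (tendsto_atTop_add_const_left _ x tendsto_natCast_atTop_atTop)
  refine squeeze_zero (fun n => sub_nonneg.2 (hmono (hpos n) (by linarith))) (fun n => ?_) hinv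
  have h := hmono (show 0 < y + n by linarith [hpos n]) (show y + n ≤ x + n + 1 by linarith)
  rw [digamma_add_one (hpos n)] at h
  linarith

lemma tendsto_sum_inv_sub_inv {x y : ℝ} (hx : 0 < x) (hxy : x ≤ y) (hyx : y ≤ x + 1) :
    Tendsto (fun N : ℕ => ∑ i ∈ range N, ((x + i)⁻¹ - (y + i)⁻¹)) atTop
      (𝓝 (digamma y - digamma x)) := by
  have hsum : ∀ N : ℕ, ∑ i ∈ range N, ((x + i)⁻¹ - (y + i)⁻¹) =
      digamma y - digamma x - (digamma (y + N) - digamma (x + N)) := fun N => by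
    rw [sum_sub_distrib, digamma_add_nat hx, digamma_add_nat (hx.trans_le hxy)]
    ring
  simpa [hsum] using tendsto_const_nhds.sub (tendsto_digamma_add_nat_sub hx hxy hyx)

lemma two_sub_two_mul_cos (φ : ℝ) : 2 - 2 * cos φ = (2 * sin (φ / 2)) ^ 2 := by
  have h := cos_two_mul (φ / 2)
  rw [mul_div_cancel₀ φ two_ne_zero] at h
  nlinarith [sin_sq_add_cos_sq (φ / 2)]

/-- `cosDenom φ t = |1 - t e^{iφ}|²`. -/
noncomputable def cosDenom (φ t : ℝ) : ℝ := 1 - 2 * t * cos φ + t ^ 2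

/-- `2 cosDenom φ t = (1 + cos φ) (1 - t)² + (1 - cos φ) (1 + t)²`. -/
lemma one_sub_cos_div_two_le_cosDenom (φ : ℝ) {t : ℝ} (ht : 0 ≤ t) :
    (1 - cos φ) / 2 ≤ cosDenom φ t := by
  have h₁ : 0 ≤ (1 + cos φ) * (1 - t) ^ 2 :=
    mul_nonneg (by linarith [neg_one_le_cos φ]) (sq_nonneg _)
  have h₂ : 0 ≤ (1 - cos φ) * (t * (2 + t)) :=
    mul_nonneg (by linarith [cos_le_one φ]) (by positivity)
  unfold cosDenom
  linarith

lemma cosDenom_pos {φ t : ℝ} (hφ : cos φ < 1) (ht : 0 ≤ t) : 0 < cosDenom φ t :=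
  (div_pos (sub_pos.2 hφ) two_pos).trans_le (one_sub_cos_div_two_le_cosDenom φ ht)

lemma continuous_cosDenom (φ : ℝ) : Continuous (cosDenom φ) := by
  unfold cosDenom
  fun_prop

lemma hasDerivAt_cosDenom (φ t : ℝ) : HasDerivAt (cosDenom φ) (2 * t - 2 * cos φ) t := by
  have h := (((hasDerivAt_id t).const_mul (2 * cos φ)).const_sub 1).add (hasDerivAt_pow 2 t)
  refine (h.congr_deriv (by simp; ring)).congr_of_eventuallyEq (.of_forall fun u => ?_)
  simp [cosDenom]
  ring

lemma intervalIntegrable_div_cosDenom {φ : ℝ} (hφ : cos φ < 1) {f : ℝ → ℝ} (hf : Continuous f) :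
    IntervalIntegrable (fun t => f t / cosDenom φ t) MeasureTheory.volume 0 1 :=
  (hf.continuousOn.div (continuous_cosDenom φ).continuousOn fun _ ht =>
    (cosDenom_pos hφ (by simpa using ht.1 : (0 : ℝ) ≤ _)).ne').intervalIntegrable

lemma integral_cos_sub_div_cosDenom {φ : ℝ} (hφ : cos φ < 1) :
    ∫ t in (0 : ℝ)..1, (cos φ - t) / cosDenom φ t = -log (2 - 2 * cos φ) / 2 := by
  have hderiv : ∀ t ∈ Set.uIcc (0 : ℝ) 1,
      HasDerivAt (fun u => -log (cosDenom φ u) / 2) ((cos φ - t) / cosDenom φ t) t := by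
    intro t ht
    rw [Set.uIcc_of_le zero_le_one] at ht
    have hq := (cosDenom_pos hφ ht.1).ne'
    exact (((hasDerivAt_cosDenom φ t).log hq).neg.div_const 2).congr_deriv (by ring)
  rw [intervalIntegral.integral_eq_sub_of_hasDerivAt hderiv
    (intervalIntegrable_div_cosDenom hφ (by fun_prop))]
  have h₀ : cosDenom φ 0 = 1 := by simp [cosDenom]
  have h₁ : cosDenom φ 1 = 2 - 2 * cos φ := by unfold cosDenom; ring
  rw [h₀, h₁, log_one]
  ring

lemma sum_cos_mul_pow_mul_cosDenom (φ t : ℝ) (M : ℕ) :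
    (∑ m ∈ range M, cos ((m + 1) * φ) * t ^ m) * cosDenom φ t =
      cos φ - t + t ^ M * (t * cos (M * φ) - cos ((M + 1) * φ)) := by
  induction M with
  | zero => simp [cosDenom]
  | succ M ih =>
    rw [sum_range_succ, add_mul, ih]
    have h₁ := cos_add ((M + 1) * φ) φ
    have h₂ := cos_sub ((M + 1) * φ) φ
    rw [show ((M : ℝ) + 1) * φ + φ = ((M + 1 : ℕ) + 1) * φ by push_cast; ring] at h₁
    rw [show ((M : ℝ) + 1) * φ - φ = M * φ by ring] at h₂
    unfold cosDenom
    push_cast at h₁ ⊢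
    linear_combination t ^ (M + 1) * h₁ + t ^ (M + 1) * h₂

lemma abs_sum_cos_mul_pow_sub_le {φ t : ℝ} (hφ : cos φ < 1) (ht₀ : 0 ≤ t) (ht₁ : t ≤ 1) (M : ℕ) :
    |∑ m ∈ range M, cos ((m + 1) * φ) * t ^ m - (cos φ - t) / cosDenom φ t|
      ≤ 4 / (1 - cos φ) * t ^ M := by
  have hq := cosDenom_pos hφ ht₀
  have hc : 0 < 1 - cos φ := sub_pos.2 hφ
  have hnum : |t * cos (M * φ) - cos ((M + 1) * φ)| ≤ 2 := by
    have := abs_cos_le_one (M * φ)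
    have := abs_cos_le_one ((M + 1) * φ)
    calc _ ≤ |t * cos (M * φ)| + |cos ((M + 1) * φ)| := abs_sub _ _
      _ ≤ 2 := by rw [abs_mul, abs_of_nonneg ht₀]; nlinarith [abs_nonneg (cos (M * φ))]
  rw [eq_div_of_mul_eq hq.ne' (sum_cos_mul_pow_mul_cosDenom φ t M), ← sub_div,
    add_sub_cancel_left, abs_div, abs_of_pos hq, abs_mul, abs_pow, abs_of_nonneg ht₀,
    div_le_iff₀ hq]
  calc t ^ M * |t * cos (M * φ) - cos ((M + 1) * φ)| ≤ t ^ M * 2 := by gcongr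
    _ = 4 / (1 - cos φ) * t ^ M * ((1 - cos φ) / 2) := by field_simp; ring
    _ ≤ 4 / (1 - cos φ) * t ^ M * cosDenom φ t := by
        gcongr
        exact one_sub_cos_div_two_le_cosDenom φ ht₀

lemma integral_sum_cos_mul_pow (φ : ℝ) (M : ℕ) :
    ∫ t in (0 : ℝ)..1, ∑ m ∈ range M, cos ((m + 1) * φ) * t ^ m =
      ∑ m ∈ range M, cos ((m + 1) * φ) / (m + 1) := by
  rw [intervalIntegral.integral_finsetSum fun m _ =>
    Continuous.intervalIntegrable (by fun_prop) 0 1]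
  refine sum_congr rfl fun m _ => ?_
  rw [intervalIntegral.integral_const_mul, integral_pow]
  simp [div_eq_mul_inv]

/-- The real part of `∑ zᵐ / m = -log (1 - z)` on the unit circle, proved through
`∑_{m < M} zᵐ⁺¹ / (m + 1) = ∫₀¹ z (1 - (tz)ᴹ) / (1 - tz) dt`. -/
theorem tendsto_sum_cos_div {φ : ℝ} (hφ : sin (φ / 2) ≠ 0) :
    Tendsto (fun M : ℕ => ∑ m ∈ range M, cos ((m + 1) * φ) / (m + 1)) atTop
      (𝓝 (-log |2 * sin (φ / 2)|)) := by
  have hcos : cos φ < 1 := by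
    have := two_sub_two_mul_cos φ
    have : 0 < (2 * sin (φ / 2)) ^ 2 := by positivity
    linarith
  have hlim : -log |2 * sin (φ / 2)| = ∫ t in (0 : ℝ)..1, (cos φ - t) / cosDenom φ t := by
    rw [integral_cos_sub_div_cosDenom hcos, two_sub_two_mul_cos, log_pow, log_abs]
    push_cast
    ring
  set C := 4 / (1 - cos φ)
  have hbound : ∀ M : ℕ, |∑ m ∈ range M, cos ((m + 1) * φ) / (m + 1) -
      ∫ t in (0 : ℝ)..1, (cos φ - t) / cosDenom φ t| ≤ C / (M + 1) := fun M => by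
    rw [← integral_sum_cos_mul_pow, ← intervalIntegral.integral_sub
      (Continuous.intervalIntegrable (by fun_prop) 0 1)
      (intervalIntegrable_div_cosDenom hcos (by fun_prop))]
    calc _ ≤ ∫ t in (0 : ℝ)..1, |∑ m ∈ range M, cos ((m + 1) * φ) * t ^ m -
            (cos φ - t) / cosDenom φ t| :=
          intervalIntegral.abs_integral_le_integral_abs zero_le_one
      _ ≤ ∫ t in (0 : ℝ)..1, C * t ^ M := by
          refine intervalIntegral.integral_mono_on zero_le_one ?_
            (Continuous.intervalIntegrable (by fun_prop) 0 1)
            fun t ht => abs_sum_cos_mul_pow_sub_le hcos ht.1 ht.2 M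
          exact ((Continuous.intervalIntegrable (by fun_prop) 0 1).sub
            (intervalIntegrable_div_cosDenom hcos (by fun_prop))).abs
      _ = C / (M + 1) := by
          rw [intervalIntegral.integral_const_mul, integral_pow]
          simp [div_eq_mul_inv]
  rw [hlim, tendsto_iff_norm_sub_tendsto_zero]
  exact squeeze_zero (fun _ => norm_nonneg _) hbound
    (tendsto_const_nhds.div_atTop (tendsto_atTop_add_const_right _ 1 tendsto_natCast_atTop_atTop))

lemma sum_range_mul_eq_sum_sum {M : Type*} [AddCommMonoid M] (f : ℕ → M) (N k : ℕ) :
    ∑ m ∈ range (N * k), f m = ∑ n ∈ range N, ∑ j ∈ range k, f (n * k + j) := by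
  induction N with
  | zero => simp
  | succ N ih => rw [Nat.succ_mul, sum_range_add, ih, sum_range_succ]

lemma sum_Icc_one_eq_sum_range {M : Type*} [AddCommMonoid M] (f : ℕ → M) (n : ℕ) :
    ∑ i ∈ Icc 1 n, f i = ∑ i ∈ range n, f (i + 1) := by
  rw [range_eq_Ico, sum_Ico_add']
  rfl

lemma sum_periodic_div_eq_sum_inv_sub_inv {a : ℕ → ℝ} {k : ℕ} (hk : 0 < k)
    (ha : Function.Periodic a k) (ha₀ : ∑ α ∈ Icc 1 k, a α = 0) (N : ℕ) :
    ∑ m ∈ range (N * k), a (m + 1) / (m + 1) =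
      (∑ α ∈ Icc 1 k, a α * ∑ n ∈ range N, (((α : ℝ) / k + n)⁻¹ - (1 + (n : ℝ))⁻¹)) / k := by
  have hk' : (k : ℝ) ≠ 0 := Nat.cast_ne_zero.2 hk.ne'
  have hper : ∀ n α : ℕ, a (n * k + α) = a α := fun n α => by
    simpa [add_comm] using ha.nat_mul n α
  calc ∑ m ∈ range (N * k), a (m + 1) / (m + 1)
      = ∑ n ∈ range N, ∑ α ∈ Icc 1 k, a (n * k + α) / (n * k + α : ℕ) := by
        rw [sum_range_mul_eq_sum_sum]
        refine sum_congr rfl fun n _ => ?_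
        rw [sum_Icc_one_eq_sum_range]
        push_cast
        simp only [add_assoc]
    _ = (∑ α ∈ Icc 1 k, a α * ∑ n ∈ range N, ((α : ℝ) / k + n)⁻¹) / k := by
        rw [sum_comm, sum_div]
        refine sum_congr rfl fun α _ => ?_
        rw [mul_sum, sum_div]
        refine sum_congr rfl fun n _ => ?_
        rw [hper]
        field_simp
        push_cast
        ring
    _ = _ := by
        simp only [sum_sub_distrib, mul_sub, ← sum_mul, ha₀, zero_mul, sub_zero]

theorem tendsto_sum_periodic_div {a : ℕ → ℝ} {k : ℕ} (hk : 0 < k) (ha : Function.Periodic a k)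
    (ha₀ : ∑ α ∈ Icc 1 k, a α = 0) :
    Tendsto (fun N : ℕ => ∑ m ∈ range (N * k), a (m + 1) / (m + 1)) atTop
      (𝓝 (-(∑ α ∈ Icc 1 k, a α * digamma (α / k)) / k)) := by
  have hlim : ∀ α ∈ Icc 1 k, Tendsto (fun N : ℕ => a α * ∑ n ∈ range N,
      (((α : ℝ) / k + n)⁻¹ - (1 + (n : ℝ))⁻¹)) atTop (𝓝 (a α * (digamma 1 - digamma (α / k)))) := by
    intro α hα
    rw [mem_Icc] at hα
    have hk' : (0 : ℝ) < k := Nat.cast_pos.2 hk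
    have hpos : (0 : ℝ) < α / k := div_pos (Nat.cast_pos.2 hα.1) hk'
    have hle : (α : ℝ) / k ≤ 1 := (div_le_one hk').2 (Nat.cast_le.2 hα.2)
    exact (tendsto_sum_inv_sub_inv hpos hle (by linarith)).const_mul _
  have htarget : -(∑ α ∈ Icc 1 k, a α * digamma (α / k)) / k =
      (∑ α ∈ Icc 1 k, a α * (digamma 1 - digamma (α / k))) / k := by
    simp only [mul_sub, sum_sub_distrib, ← sum_mul, ha₀, zero_mul, zero_sub]
  rw [htarget]
  simpa only [sum_periodic_div_eq_sum_inv_sub_inv hk ha ha₀] using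
    (tendsto_finsetSum _ hlim).div_const _

lemma sum_cos_two_pi_mul_div_eq_zero {k θ : ℕ} (hθ : ¬ k ∣ θ) :
    ∑ α ∈ Icc 1 k, cos (2 * π * α * θ / k) = 0 := by
  rcases Nat.eq_zero_or_pos k with rfl | hk
  · simp
  set z := Complex.exp (2 * π * Complex.I / k) ^ θ
  have hζ := Complex.isPrimitiveRoot_exp k hk.ne'
  have hz₁ : z ≠ 1 := fun h => hθ ((hζ.pow_eq_one_iff_dvd θ).1 h)
  have hzk : z ^ k = 1 := by rw [pow_right_comm, hζ.pow_eq_one, one_pow]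
  have hre : ∀ α : ℕ, cos (2 * π * α * θ / k) = (z ^ α).re := fun α => by
    rw [← pow_mul, ← Complex.exp_nat_mul, ← Complex.exp_ofReal_mul_I_re]
    congr 2
    push_cast
    ring
  have hsum : ∑ α ∈ Icc 1 k, z ^ α = 0 := by
    simp_rw [sum_Icc_one_eq_sum_range, pow_succ', ← mul_sum, geom_sum_eq hz₁, hzk, sub_self,
      zero_div, mul_zero]
  simp_rw [hre, ← Complex.re_sum, hsum, Complex.zero_re]

theorem stmt_11_general (k : ℕ) (θ : ℕ) (hθ1 : 1 ≤ θ) (hθk : θ ≤ k - 1) :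
    ∑ α ∈ Finset.Icc 1 k, Real.cos (2 * π * α * θ / k) * digamma ((α : ℝ) / k) =
      k * Real.log (2 * Real.sin (π * θ / k)) := by
  have hk₀ : 0 < k := by omega
  have hk' : (0 : ℝ) < k := Nat.cast_pos.2 hk₀
  set a : ℕ → ℝ := fun α => cos (2 * π * α * θ / k)
  have ha : Function.Periodic a k := fun α => by
    simp only [a, Nat.cast_add]
    rw [show 2 * π * (α + k) * θ / k = 2 * π * α * θ / k + θ * (2 * π) by field_simp]
    exact cos_add_nat_mul_two_pi _ θ
  have ha₀ : ∑ α ∈ Icc 1 k, a α = 0 :=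
    sum_cos_two_pi_mul_div_eq_zero (Nat.not_dvd_of_pos_of_lt hθ1 (by omega))
  have hθ' : (θ : ℝ) < k := Nat.cast_lt.2 (by omega)
  have hsin : 0 < sin (π * θ / k) := sin_pos_of_pos_of_lt_pi (by positivity)
    (by rw [div_lt_iff₀ hk']; exact mul_lt_mul_of_pos_left hθ' pi_pos)
  have hhalf : 2 * π * θ / k / 2 = π * θ / k := by ring
  have hfourier := (tendsto_sum_cos_div (hhalf ▸ hsin.ne')).comp (tendsto_id.atTop_mul_const' hk₀)
  rw [hhalf, abs_of_pos (by positivity)] at hfourier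
  have hlim := tendsto_nhds_unique (tendsto_sum_periodic_div hk₀ ha ha₀)
    (hfourier.congr fun N => sum_congr rfl fun m _ => by simp only [a]; push_cast; ring_nf)
  field_simp at hlim
  linarith

theorem stmt_11 (k : ℕ) (hk : 2 ≤ k) (θ : ℕ) (hθ1 : 1 ≤ θ) (hθk : θ ≤ k - 1) :
    ∑ α ∈ Finset.Icc 1 k, Real.cos (2 * π * α * θ / k) * digamma ((α : ℝ) / k) =
      k * Real.log (2 * Real.sin (π * θ / k)) :=
  stmt_11_general k θ hθ1 hθk
end

section
/- Let k be a positive integer and θ an integer with 1 ≤ θ ≤ k-1. Then ∑_{α=1}^{k} sin(2παθ/k) · ψ(α/k) = (π/2)·(2θ - k), where ψ is the digamma function. -/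
/-
Only the terms with `0 < α < k` contribute. Pairing `α` with `k - α` and using the reflection
formula `ψ(x) - ψ(1 - x) = -π cot (π x)` turns twice the sum into `-π ∑ sin (2θx_α) cot x_α` with
`x_α = πα/k`. The telescoping identity `cot x sin (2θx) = ∑_{j<θ} (cos (2jx) + cos (2(j+1)x))`
reduces this to the sums `∑_{α=1}^{k-1} cos (2πjα/k)`, which are `k - 1` for `j = 0` and, as the
powers of a `k`-th root of unity `≠ 1` sum to zero, `-1` for `0 < j ≤ θ < k`; altogether `k - 2θ`.
-/

open Real Finset

/- The reflection formula for `ψ` is the logarithmic derivative of `Γ(x) Γ(1 - x) = π / sin (π x)`. -/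
theorem digamma_sub_digamma_one_sub {x : ℝ} (hx : ∀ n : ℤ, x ≠ n) :
    digamma x - digamma (1 - x) = -π * cot (π * x) := by
  have hsin : sin (π * x) ≠ 0 := by
    rw [Ne, sin_eq_zero_iff]
    rintro ⟨n, hn⟩
    exact hx n (mul_left_cancel₀ pi_ne_zero (by linarith))
  have hpole : ∀ m : ℕ, x ≠ -m := fun m => by exact_mod_cast hx (-m)
  have hpole' : ∀ m : ℕ, 1 - x ≠ -m := fun m h => hx (m + 1) (by push_cast; linarith)
  have hG : HasDerivAt (fun y => Gamma y * Gamma (1 - y))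
      (deriv Gamma x * Gamma (1 - x) - Gamma x * deriv Gamma (1 - x)) x :=
    ((differentiableAt_Gamma hpole).hasDerivAt.mul
      ((differentiableAt_Gamma hpole').hasDerivAt.comp_const_sub 1 x)).congr_deriv (by ring)
  have hS : HasDerivAt (fun y => π / sin (π * y)) (-(π * (cos (π * x) * π)) / sin (π * x) ^ 2) x :=
    ((hasDerivAt_const x π).div ((hasDerivAt_id' x).const_mul π).sin hsin).congr_deriv (by ring)
  rw [funext Gamma_mul_Gamma_one_sub] at hG
  have hderiv := hS.unique hG
  have hprod := Gamma_mul_Gamma_one_sub x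
  have hΓ : Gamma x ≠ 0 := Gamma_ne_zero hpole
  have hΓ' : Gamma (1 - x) ≠ 0 := Gamma_ne_zero hpole'
  rw [digamma, digamma, div_sub_div _ _ hΓ hΓ', ← hderiv, hprod, cot_eq_cos_div_sin]
  field_simp

theorem cot_mul_sin_two_mul_nat_mul {x : ℝ} (hx : sin x ≠ 0) (n : ℕ) :
    cot x * sin (2 * n * x) = ∑ j ∈ range n, (cos (2 * j * x) + cos (2 * (j + 1) * x)) := by
  rw [cot_eq_cos_div_sin, div_mul_eq_mul_div, div_eq_iff hx]
  induction n with
  | zero => simp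
  | succ n ih =>
    rw [sum_range_succ, add_mul, ← ih]
    have h₁ : 2 * (n : ℝ) * x = (2 * n + 1) * x - x := by ring
    have h₂ : 2 * ((n + 1 : ℕ) : ℝ) * x = (2 * n + 1) * x + x := by push_cast; ring
    have h₃ : 2 * ((n : ℝ) + 1) * x = (2 * n + 1) * x + x := by ring
    rw [h₂, h₃, h₁, sin_add, sin_sub, cos_add, cos_sub]
    ring

theorem sum_range_cos_two_pi_mul_div {k j : ℕ} (hj : ¬ k ∣ j) :
    ∑ α ∈ range k, cos (2 * π * j * α / k) = 0 := by
  rcases Nat.eq_zero_or_pos k with rfl | hk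
  · simp
  have hζ := Complex.isPrimitiveRoot_exp k hk.ne'
  set z := Complex.exp (2 * π * Complex.I / k) ^ j
  have hz : z ≠ 1 := fun h => hj (hζ.pow_eq_one_iff_dvd j |>.1 h)
  have hzk : z ^ k = 1 := by rw [pow_right_comm, hζ.pow_eq_one, one_pow]
  have hre : ∀ α : ℕ, (z ^ α).re = cos (2 * π * j * α / k) := fun α => by
    rw [← pow_mul, ← Complex.exp_nat_mul, ← Complex.exp_ofReal_mul_I_re]
    congr 2
    push_cast
    ring
  simp_rw [← hre, ← Complex.re_sum, geom_sum_eq hz, hzk, sub_self, zero_div, Complex.zero_re]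

theorem sum_Ico_cos_two_pi_mul_div {k j : ℕ} (hk : 0 < k) (hj : ¬ k ∣ j) :
    ∑ α ∈ Ico 1 k, cos (2 * π * j * α / k) = -1 := by
  have h := sum_range_cos_two_pi_mul_div hj
  rw [range_eq_Ico, sum_eq_sum_Ico_succ_bot hk] at h
  simp only [Nat.cast_zero, mul_zero, zero_div, cos_zero] at h
  linarith

theorem sum_Ico_sin_mul_cot {k θ : ℕ} (hθ : 0 < θ) (hθk : θ < k) :
    ∑ α ∈ Ico 1 k, sin (2 * π * α * θ / k) * cot (π * α / k) = k - 2 * θ := by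
  set C : ℕ → ℝ := fun j => ∑ α ∈ Ico 1 k, cos (2 * π * j * α / k)
  have hC0 : C 0 = k - 1 := by
    simp [C, Nat.cast_sub (by omega : 1 ≤ k)]
  have hC : ∀ j, 0 < j → j ≤ θ → C j = -1 := fun j hj hjθ =>
    sum_Ico_cos_two_pi_mul_div (by omega) (Nat.not_dvd_of_pos_of_lt hj (by omega))
  have hexpand : ∀ α ∈ Ico 1 k, sin (2 * π * α * θ / k) * cot (π * α / k) =
      ∑ j ∈ range θ, (cos (2 * π * j * α / k) + cos (2 * π * (j + 1 : ℕ) * α / k)) := by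
    intro α hα
    rw [mem_Ico] at hα
    have hα0 : (0 : ℝ) < α := by exact_mod_cast hα.1
    have hk0 : (0 : ℝ) < k := by exact_mod_cast (zero_lt_one.trans_le hα.1).trans hα.2
    have hsin : sin (π * α / k) ≠ 0 := by
      refine (sin_pos_of_pos_of_lt_pi (by positivity) ?_).ne'
      rw [div_lt_iff₀ hk0]
      exact mul_lt_mul_of_pos_left (by exact_mod_cast hα.2) pi_pos
    rw [mul_comm, show 2 * π * α * θ / k = 2 * θ * (π * α / k) by ring,
      cot_mul_sin_two_mul_nat_mul hsin]
    refine sum_congr rfl fun j _ => ?_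
    push_cast
    ring_nf
  calc ∑ α ∈ Ico 1 k, sin (2 * π * α * θ / k) * cot (π * α / k)
      = ∑ j ∈ range θ, (C j + C (j + 1)) := by
        rw [sum_congr rfl hexpand, sum_comm]
        exact sum_congr rfl fun j _ => sum_add_distrib
    _ = k - 2 * θ := by
        obtain ⟨n, rfl⟩ : ∃ n, θ = n + 1 := ⟨θ - 1, by omega⟩
        rw [sum_range_succ', sum_congr rfl fun j hj => by
          have := mem_range.1 hj
          rw [hC (j + 1) (by omega) (by omega), hC (j + 1 + 1) (by omega) (by omega)],
          hC0, hC 1 (by omega) (by omega)]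
        rw [sum_const, card_range, nsmul_eq_mul]
        push_cast
        ring

theorem sin_mul_digamma_add_reflect {k α : ℕ} (θ : ℕ) (hα : 0 < α) (hαk : α < k) :
    sin (2 * π * α * θ / k) * digamma (α / k) +
        sin (2 * π * ↑(k - α) * θ / k) * digamma (↑(k - α) / k) =
      -π * (sin (2 * π * α * θ / k) * cot (π * α / k)) := by
  have hk0 : (k : ℝ) ≠ 0 := Nat.cast_ne_zero.2 (by omega)
  have hx0 : (0 : ℝ) < α / k := by
    have : (0 : ℝ) < α := by exact_mod_cast hα
    positivity
  have hx1 : (α : ℝ) / k < 1 := by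
    rw [div_lt_one (by positivity)]
    exact_mod_cast hαk
  have hx : ∀ n : ℤ, (α : ℝ) / k ≠ n := by
    rintro n hn
    rw [hn] at hx0 hx1
    have : 0 < n := by exact_mod_cast hx0
    have : n < 1 := by exact_mod_cast hx1
    omega
  have hsin : sin (2 * π * ↑(k - α) * θ / k) = -sin (2 * π * α * θ / k) := by
    rw [← sin_nat_mul_two_pi_sub _ θ, Nat.cast_sub hαk.le]
    congr 1
    field_simp
  have hdiv : ((k - α : ℕ) : ℝ) / k = 1 - α / k := by
    rw [Nat.cast_sub hαk.le]
    field_simp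
  rw [hsin, hdiv, mul_div_assoc π]
  linear_combination sin (2 * π * α * θ / k) * digamma_sub_digamma_one_sub hx

theorem stmt_12_general (k : ℕ) (θ : ℕ) (hθ1 : 1 ≤ θ) (hθk : θ ≤ k - 1) :
    ∑ α ∈ Finset.Icc 1 k, Real.sin (2 * π * α * θ / k) * digamma ((α : ℝ) / k) =
      π / 2 * (2 * (θ : ℝ) - k) := by
  set f : ℕ → ℝ := fun α => sin (2 * π * α * θ / k) * digamma (α / k)
  have hk0 : (k : ℝ) ≠ 0 := Nat.cast_ne_zero.2 (by omega)
  have htop : f k = 0 := by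
    simp only [f, show 2 * π * k * θ / k = (2 * θ : ℕ) * π by push_cast; field_simp,
      sin_nat_mul_pi, zero_mul]
  have hIcc : ∑ α ∈ Icc 1 k, f α = ∑ α ∈ Ico 1 k, f α := by
    rw [← Ico_add_one_right_eq_Icc, sum_Ico_succ_top (by omega), htop, add_zero]
  have hreflect : ∑ α ∈ Ico 1 k, f (k - α) = ∑ α ∈ Ico 1 k, f α := by
    simpa using sum_Ico_reflect f 1 (Nat.le_succ k)
  have hpair : ∀ α ∈ Ico 1 k,
      f α + f (k - α) = -π * (sin (2 * π * α * θ / k) * cot (π * α / k)) :=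
    fun α hα => sin_mul_digamma_add_reflect θ (mem_Ico.1 hα).1 (mem_Ico.1 hα).2
  have hsum := sum_add_distrib.symm.trans (sum_congr rfl hpair)
  rw [hreflect, ← mul_sum, sum_Ico_sin_mul_cot hθ1 (by omega)] at hsum
  rw [hIcc]
  linarith

theorem stmt_12 (k : ℕ) (hk : 2 ≤ k) (θ : ℕ) (hθ1 : 1 ≤ θ) (hθk : θ ≤ k - 1) :
    ∑ α ∈ Finset.Icc 1 k, Real.sin (2 * π * α * θ / k) * digamma ((α : ℝ) / k) =
      π / 2 * (2 * (θ : ℝ) - k) :=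
  stmt_12_general k θ hθ1 hθk
end
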